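/- (Theorem 5.1, Case 3: reverse KL aggressively reduces probability mass on categories that are unlikely under the target distribution.) In the setting of one gradient step on the logits of a softmax distribution, suppose x1, x2 ∈ Y satisfy p(x2) < p(x1), q(x1) = q(x2), and log q(x1) + D_KL(p‖q) ≤ log p(x2) (i.e., q(x1) ≤ c₁·p(x2) with the constant c₁ = exp(−D_KL(p‖q)) < 1, noting D_KL(p‖q) > 0 under these hypotheses). Then Δ^r(x1, x2) < Δ^f(x1, x2). -/
import Mathlib


open scoped BigOperators

/-- Softmax distribution attached to a vector of logits on a finite type. -/
noncomputable def softmax {Y : Type*} [Fintype Y] (f : Y → ℝ) (y : Y) : ℝ :=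
  Real.exp (f y) / ∑ k, Real.exp (f k)

/-- KL divergence between two distributions on a finite type,
with the convention `0 * log 0 = 0` (automatic since `0 * x = 0`). -/
noncomputable def KL {Y : Type*} [Fintype Y] (p q : Y → ℝ) : ℝ :=
  ∑ y, p y * Real.log (p y / q y)

lemma softmax_sum_pos {Y : Type*} [Fintype Y] [Nonempty Y] (f : Y → ℝ) :
    0 < ∑ k, Real.exp (f k) :=
  Finset.sum_pos (fun i _ => Real.exp_pos _) Finset.univ_nonempty

lemma softmax_pos {Y : Type*} [Fintype Y] [Nonempty Y] (f : Y → ℝ) (y : Y) :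
    0 < softmax f y :=
  div_pos (Real.exp_pos _) (softmax_sum_pos f)

lemma log_softmax {Y : Type*} [Fintype Y] [Nonempty Y] (f : Y → ℝ) (y : Y) :
    Real.log (softmax f y) = f y - Real.log (∑ k, Real.exp (f k)) := by
  unfold softmax
  rw [Real.log_div (Real.exp_pos _).ne' (softmax_sum_pos f).ne', Real.log_exp]

lemma delta_eq {Y : Type*} [Fintype Y] [Nonempty Y] (f G : Y → ℝ) (η : ℝ) (x1 x2 : Y) :
    Real.log (softmax (f - η • G) x1 / softmax f x1)
      - Real.log (softmax (f - η • G) x2 / softmax f x2)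
      = -η * (G x1 - G x2) := by
  rw [Real.log_div (softmax_pos _ _).ne' (softmax_pos _ _).ne',
      Real.log_div (softmax_pos _ _).ne' (softmax_pos _ _).ne',
      log_softmax, log_softmax, log_softmax, log_softmax]
  simp only [Pi.sub_apply, Pi.smul_apply, smul_eq_mul]
  ring

/-- Theorem 5.1, Case 3: if `p(x2) < p(x1)`,
`q(x1) = q(x2)` and `log q(x1) + D_KL(p‖q) ≤ log p(x2)` (i.e.
`q(x1) ≤ c₁·p(x2)` with `c₁ = exp(−D_KL(p‖q)) < 1`), then the reverse-KL step
reduces the log-probability ratio of `x1` over `x2` strictly more than the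
forward-KL step: `Δ^r(x1,x2) < Δ^f(x1,x2)`. -/
theorem reverse_KL_reduces_unlikely_mass_case3
    {Y : Type*} [Fintype Y] (hcard : 2 ≤ Fintype.card Y)
    (q : Y → ℝ) (hq_pos : ∀ y, 0 < q y) (hq_sum : ∑ y, q y = 1)
    (f : Y → ℝ) (η : ℝ) (hη : 0 < η)
    (p pf pr : Y → ℝ)
    (hp : p = softmax f)
    (hpf : pf = softmax (f - η • fun y => p y - q y))
    (hpr : pr = softmax (f - η • fun y => p y * (Real.log (p y / q y) - KL p q)))
    (x1 x2 : Y)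
    (hpp : p x2 < p x1) (hq12 : q x1 = q x2)
    (hsmall : Real.log (q x1) + KL p q ≤ Real.log (p x2)) :
    Real.log (pr x1 / p x1) - Real.log (pr x2 / p x2) <
      Real.log (pf x1 / p x1) - Real.log (pf x2 / p x2) := by
  have hne : Nonempty Y := Fintype.card_pos_iff.mp (by omega)
  subst hp hpf hpr
  rw [delta_eq, delta_eq]
  set a := softmax f x1 with ha'
  set b := softmax f x2 with hb'
  have ha : 0 < a := softmax_pos f x1
  have hb : 0 < b := softmax_pos f x2
  have hc : 0 < q x1 := hq_pos x1
  set K := KL (softmax f) q with hK'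
  -- rewrite logs of quotients
  have hla : Real.log (a / q x1) = Real.log a - Real.log (q x1) :=
    Real.log_div ha.ne' hc.ne'
  have hlb : Real.log (b / q x2) = Real.log b - Real.log (q x1) := by
    rw [← hq12]; exact Real.log_div hb.ne' hc.ne'
  have hL : 0 ≤ Real.log b - Real.log (q x1) - K := by
    simp only [hK'] at *
    linarith [hsmall]
  -- key : a * (log a - log b) > a - b
  have hba1 : b / a < 1 := (div_lt_one ha).mpr hpp
  have h1 : Real.log (b / a) < b / a - 1 :=
    Real.log_lt_sub_one_of_pos (div_pos hb ha) (ne_of_lt hba1)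
  have h2 : Real.log b - Real.log a < b / a - 1 := by
    rwa [Real.log_div hb.ne' ha.ne'] at h1
  have h3 : a * (Real.log b - Real.log a) < b - a := by
    have := (mul_lt_mul_of_pos_left h2 ha)
    have hab : a * (b / a - 1) = b - a := by field_simp
    linarith [this, hab ▸ this]
  have hmain : (a - q x1) - (b - q x2)
      < a * (Real.log (a / q x1) - K) - b * (Real.log (b / q x2) - K) := by
    rw [hla, hlb, ← hq12]
    nlinarith [mul_nonneg (sub_nonneg.mpr hpp.le) hL, h3]
  nlinarith [hmain, hη]
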